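/- For every n ≥ 1, every Boolean function f : {0,1}^n → {0,1} satisfies d(f) ≤ ⌈n/2⌉, and there exists a Boolean function of n variables attaining d(f) = ⌈n/2⌉. -/

import Mathlib

/-!
A strict coordinatewise increase raises the weight `∑ xᵢ`, so a chain in `{0,1}ⁿ` has at most
`n + 1` elements. A Boolean function that decreases from one element of a chain to the next takes
the value `0` there, so it cannot decrease again at the following step; a chain of length `L`
therefore carries at most `⌊L / 2⌋` decreases. Conversely the indicator of even weight, read
along the staircase `0⋯0 < 10⋯0 < 110⋯0 < ⋯ < 1⋯1`, takes the values `1, 0, 1, 0, …` and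
decreases `⌈n / 2⌉` times.
-/

/-- A chain in `E_k^n`: pairwise distinct tuples increasing coordinatewise,
    i.e. strictly increasing in the coordinatewise (product) order. -/
def IsChainE {n k : ℕ} (C : List (Fin n → Fin k)) : Prop :=
  C.Chain' (· < ·)

/-- The decrease `d_C(f)` of `f` over a chain `C`: number of consecutive
    pairs on which `f` strictly decreases. -/
def decC {n k : ℕ} (f : (Fin n → Fin k) → Fin k) (C : List (Fin n → Fin k)) : ℕ :=
  (C.zip C.tail).countP (fun p => decide (f p.2 < f p.1))

/-- The decrease `d(f)` of `f`: maximum of `d_C(f)` over all chains `C`. -/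
noncomputable def dF {n k : ℕ} (f : (Fin n → Fin k) → Fin k) : ℕ :=
  sSup {m : ℕ | ∃ C : List (Fin n → Fin k), IsChainE C ∧ decC f C = m}

section General

variable {n k : ℕ}

def weight (x : Fin n → Fin k) : ℕ := ∑ i, (x i : ℕ)

lemma weight_lt_weight {a b : Fin n → Fin k} (hab : a < b) : weight a < weight b := by
  obtain ⟨hle, i, hi⟩ := Pi.lt_def.mp hab
  exact Finset.sum_lt_sum (fun j _ => hle j) ⟨i, Finset.mem_univ i, hi⟩

lemma weight_le (x : Fin n → Fin k) : weight x ≤ n * (k - 1) := by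
  calc weight x ≤ ∑ _i : Fin n, (k - 1) := Finset.sum_le_sum fun i _ => by omega
    _ = n * (k - 1) := by simp

lemma IsChainE.length_le {C : List (Fin n → Fin k)} (hC : IsChainE C) :
    C.length ≤ n * (k - 1) + 1 := by
  have hsorted : (C.map weight).Pairwise (· < ·) :=
    List.isChain_iff_pairwise.mp <|
      (List.isChain_map weight).mpr (hC.imp fun _ _ => weight_lt_weight)
  have hsub : C.map weight ⊆ List.range (n * (k - 1) + 1) := by
    intro w hw
    obtain ⟨x, -, rfl⟩ := List.mem_map.mp hw
    exact List.mem_range.mpr (Nat.lt_succ_of_le (weight_le x))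
  have hnodup : (C.map weight).Nodup := hsorted.imp Nat.ne_of_lt
  simpa using (hnodup.subperm hsub).length_le

lemma decC_cons_cons (f : (Fin n → Fin k) → Fin k) (a b : Fin n → Fin k)
    (t : List (Fin n → Fin k)) :
    decC f (a :: b :: t) = (if f b < f a then 1 else 0) + decC f (b :: t) := by
  by_cases h : f b < f a <;> simp [decC, h, Nat.add_comm]

lemma decC_cons_of_isMin (f : (Fin n → Fin k) → Fin k) {b : Fin n → Fin k} (hb : IsMin (f b))
    (t : List (Fin n → Fin k)) : decC f (b :: t) = decC f t := by
  cases t with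
  | nil => simp [decC]
  | cons c t => simp [hb.not_lt, decC]

lemma decC_le_length (f : (Fin n → Fin k) → Fin k) (C : List (Fin n → Fin k)) :
    decC f C ≤ C.length :=
  List.countP_le_length.trans (by simp)

lemma dF_le {f : (Fin n → Fin k) → Fin k} {m : ℕ} (h : ∀ C, IsChainE C → decC f C ≤ m) :
    dF f ≤ m :=
  csSup_le ⟨0, [], List.isChain_nil, rfl⟩ (by rintro _ ⟨C, hC, rfl⟩; exact h C hC)

lemma decC_le_dF (f : (Fin n → Fin k) → Fin k) {C : List (Fin n → Fin k)} (hC : IsChainE C) :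
    decC f C ≤ dF f := by
  refine le_csSup ⟨n * (k - 1) + 1, ?_⟩ ⟨C, hC, rfl⟩
  rintro _ ⟨D, hD, rfl⟩
  exact (decC_le_length f D).trans hD.length_le

end General

section Boolean

variable {n : ℕ}

lemma decC_le_length_div_two (f : (Fin n → Fin 2) → Fin 2) :
    ∀ C : List (Fin n → Fin 2), decC f C ≤ C.length / 2
  | [] => by simp [decC]
  | [_] => by simp [decC]
  | a :: b :: t => by
    rw [decC_cons_cons]
    by_cases h : f b < f a
    · have hb : IsMin (f b) := fun c _ => by omega
      have := decC_le_length_div_two f t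
      simp only [h, if_true, decC_cons_of_isMin f hb, List.length_cons]
      omega
    · have := decC_le_length_div_two f (b :: t)
      simp only [h, if_false, List.length_cons] at this ⊢
      omega

def evenWeightIndicator (x : Fin n → Fin 2) : Fin 2 := if Even (weight x) then 1 else 0

def stair (n j : ℕ) : Fin n → Fin 2 := fun i => if (i : ℕ) < j then 1 else 0

lemma weight_stair {j : ℕ} (hj : j ≤ n) : weight (stair n j) = j := by
  simp only [weight, stair, apply_ite Fin.val, Fin.val_one, Fin.val_zero]
  have hfilter : (Finset.range n).filter (· < j) = Finset.range j := by
    ext i; simp only [Finset.mem_filter, Finset.mem_range]; omega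
  rw [Fin.sum_univ_eq_sum_range (fun i => if i < j then 1 else 0), Finset.sum_boole, Nat.cast_id,
    hfilter, Finset.card_range]

lemma stair_lt_stair {j : ℕ} (hj : j < n) : stair n j < stair n (j + 1) := by
  refine Pi.lt_def.mpr ⟨fun i => ?_, ⟨j, hj⟩, by simp [stair]⟩
  by_cases h : (i : ℕ) < j
  · simp [stair, h, Nat.lt_succ_of_lt h]
  · simp only [stair, h, if_false]
    exact Fin.zero_le _

lemma isChainE_stairs : IsChainE ((List.range (n + 1)).map (stair n)) :=
  (List.isChain_map _).mpr ((List.isChain_range_succ _ n).mpr fun _ hj => stair_lt_stair hj)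

lemma decC_evenWeightIndicator_stairs :
    ∀ {s m : ℕ}, s + m ≤ n →
      decC evenWeightIndicator ((List.range' s (m + 1)).map (stair n)) = (m + 1 - s % 2) / 2
  | _, 0, _ => by simp [decC]; omega
  | s, m + 1, hsm => by
    rw [List.range'_succ, List.map_cons, List.range'_succ, List.map_cons, decC_cons_cons,
      ← List.map_cons, ← List.range'_succ, decC_evenWeightIndicator_stairs (by omega)]
    simp only [evenWeightIndicator, weight_stair (show s + 1 ≤ n by omega),
      weight_stair (show s ≤ n by omega), Nat.even_iff]
    by_cases hs : s % 2 = 0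
    · simp [hs, show (s + 1) % 2 = 1 by omega]; omega
    · simp [hs, show (s + 1) % 2 = 0 by omega]; omega

end Boolean

theorem stmt13_general {n : ℕ} :
    (∀ f : (Fin n → Fin 2) → Fin 2, dF f ≤ (n + 1) / 2) ∧
    (∃ f : (Fin n → Fin 2) → Fin 2, dF f = (n + 1) / 2) := by
  have upper : ∀ f : (Fin n → Fin 2) → Fin 2, dF f ≤ (n + 1) / 2 := fun f =>
    dF_le fun C hC => (decC_le_length_div_two f C).trans
      (Nat.div_le_div_right (by simpa using hC.length_le))
  refine ⟨upper, evenWeightIndicator, (upper _).antisymm ?_⟩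
  have hstairs := decC_evenWeightIndicator_stairs (n := n) (s := 0) (m := n) (by omega)
  rw [← List.range_eq_range'] at hstairs
  exact hstairs ▸ decC_le_dF evenWeightIndicator isChainE_stairs

/-- For `n ≥ 1`, every Boolean function satisfies `d(f) ≤ ⌈n/2⌉`, and some
    Boolean function of `n` variables attains this bound. -/
theorem stmt13 {n : ℕ} (hn : 1 ≤ n) :
    (∀ f : (Fin n → Fin 2) → Fin 2, dF f ≤ (n + 1) / 2) ∧
    (∃ f : (Fin n → Fin 2) → Fin 2, dF f = (n + 1) / 2) :=
  stmt13_general
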